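/- arXiv:1805.11170 — 5 statements merged into one kernel-verified Lean document; each statement's English description precedes it below -/
import Mathlib

section
/- Let B = (b_0, ..., b_ℓ) be an ℓ-segmentation covering [1, i], and let τ be a real number such that τ ≤ p(b_{c-1}, b_c + 1) for every c = 1, ..., ℓ. Then any ℓ-segmentation B' covering [1, j] with j > i satisfies Max(B') ≥ τ. -/
theorem stmt3 (ℓ i j : ℕ) (hl : 0 < ℓ) (hij : i < j) (p : ℕ → ℕ → ℝ)
    (hmono : ∀ a1 a2 b2 b1 : ℕ, a1 ≤ a2 → a2 ≤ b2 → b2 ≤ b1 → p a2 b2 ≤ p a1 b1)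
    (hpos : ∀ a b : ℕ, 0 ≤ p a b)
    (τ : ℝ)
    (B : ℕ → ℕ) (hB0 : B 0 = 1) (hBl : B ℓ = i) (hBm : ∀ c < ℓ, B c ≤ B (c + 1))
    (hτ : ∀ c < ℓ, τ ≤ p (B c) (B (c + 1) + 1))
    (B' : ℕ → ℕ) (hB'0 : B' 0 = 1) (hB'l : B' ℓ = j) (hB'm : ∀ c < ℓ, B' c ≤ B' (c + 1)) :
    τ ≤ (Finset.range ℓ).sup' (Finset.nonempty_range_iff.mpr hl.ne')
          (fun c => p (B' c) (B' (c + 1))) := by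
  have hex : ∃ c < ℓ, B' c ≤ B c ∧ B (c + 1) + 1 ≤ B' (c + 1) := by
    by_contra h
    push_neg at h
    have hall : ∀ c ≤ ℓ, B' c ≤ B c := by
      intro c hc
      induction c with
      | zero => simp [hB0, hB'0]
      | succ n ih =>
        have hn : n < ℓ := hc
        have := h n hn (ih (Nat.le_of_lt hn))
        omega
    have := hall ℓ le_rfl
    omega
  obtain ⟨c, hc, h1, h2⟩ := hex
  have key : p (B c) (B (c + 1) + 1) ≤ p (B' c) (B' (c + 1)) := by
    apply hmono _ _ _ _ h1 _ h2
    have := hBm c hc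
    omega
  calc τ ≤ p (B' c) (B' (c + 1)) := (hτ c hc).trans key
    _ ≤ _ := Finset.le_sup' (fun c => p (B' c) (B' (c + 1))) (Finset.mem_range.mpr hc)
end

section
/- Let B and B' be ℓ-segmentations with b_0 = b'_0 = 1, and suppose for every c, p(b_{c-1}, b_c + 1) ≥ τ while Max(B') < τ. Then b'_c ≤ b_c for every c = 1, ..., ℓ (proved by induction on c using monotonicity of p). -/
theorem stmt4 (ℓ : ℕ) (hl : 0 < ℓ) (p : ℕ → ℕ → ℝ)
    (hmono : ∀ a1 a2 b2 b1 : ℕ, a1 ≤ a2 → a2 ≤ b2 → b2 ≤ b1 → p a2 b2 ≤ p a1 b1)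
    (hpos : ∀ a b : ℕ, 0 ≤ p a b)
    (τ : ℝ)
    (B B' : ℕ → ℕ) (hB0 : B 0 = 1) (hB'0 : B' 0 = 1)
    (hBm : ∀ c < ℓ, B c ≤ B (c + 1)) (hB'm : ∀ c < ℓ, B' c ≤ B' (c + 1))
    (hτ : ∀ c < ℓ, τ ≤ p (B c) (B (c + 1) + 1))
    (hmax : (Finset.range ℓ).sup' (Finset.nonempty_range_iff.mpr hl.ne')
        (fun c => p (B' c) (B' (c + 1))) < τ) :
    ∀ c, 1 ≤ c → c ≤ ℓ → B' c ≤ B c := by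
  have key : ∀ c, c ≤ ℓ → B' c ≤ B c := by
    intro c
    induction c with
    | zero => intro _; rw [hB0, hB'0]
    | succ c ih =>
      intro hc1
      have hcℓ : c < ℓ := Nat.lt_of_succ_le hc1
      have ihc : B' c ≤ B c := ih hcℓ.le
      by_contra h
      push_neg at h
      have h1 : B (c + 1) + 1 ≤ B' (c + 1) := h
      have hle : p (B c) (B (c + 1) + 1) ≤ p (B' c) (B' (c + 1)) :=
        hmono _ _ _ _ ihc (le_trans (hBm c hcℓ) (Nat.le_succ _)) h1
      have hsup : p (B' c) (B' (c + 1)) ≤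
          (Finset.range ℓ).sup' (Finset.nonempty_range_iff.mpr hl.ne')
            (fun c => p (B' c) (B' (c + 1))) :=
        Finset.le_sup' (fun c => p (B' c) (B' (c + 1))) (Finset.mem_range.mpr hcℓ)
      linarith [hτ c hcℓ]
  exact fun c _ hc => key c hc
end

section
/- Let s be a function with 0 ≤ s(x) for all x, and let A = (a_1 < a_2 < ... < a_m) be a sorted list of indices with a_1 = 1 that is δ-dense, meaning for every j ≥ 2 either s(a_j) ≤ δ + s(a_{j-1}) or a_j = a_{j-1} + 1, where s is monotone nondecreasing on indices. Then for every b with 1 ≤ b ≤ a_m, there exists a_j in A with b ≤ a_j and s(a_j) ≤ s(b) + δ. -/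
/-- Density lemma: if `a 1 = 1 < a 2 < ... < a m` is `δ`-dense w.r.t. a monotone
nonnegative `s`, then every `b ∈ [1, a m]` is approximated by some `a j ≥ b`. -/
theorem stmt11 (s : ℕ → ℝ) (hs : Monotone s) (hs0 : ∀ x, 0 ≤ s x)
    (δ : ℝ) (hδ : 0 ≤ δ) (m : ℕ) (hm : 1 ≤ m) (a : ℕ → ℕ)
    (ha1 : a 1 = 1)
    (hsort : ∀ j, 1 ≤ j → j < m → a j < a (j + 1))
    (hdense : ∀ j, 2 ≤ j → j ≤ m → s (a j) ≤ δ + s (a (j - 1)) ∨ a j = a (j - 1) + 1) :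
    ∀ b, 1 ≤ b → b ≤ a m → ∃ j, 1 ≤ j ∧ j ≤ m ∧ b ≤ a j ∧ s (a j) ≤ s b + δ := by
  intro b hb1 hb2
  have hex : ∃ j, 1 ≤ j ∧ j ≤ m ∧ b ≤ a j := ⟨m, hm, le_refl m, hb2⟩
  classical
  let j := Nat.find hex
  obtain ⟨hj1, hjm, hjb⟩ : 1 ≤ j ∧ j ≤ m ∧ b ≤ a j := Nat.find_spec hex
  refine ⟨j, hj1, hjm, hjb, ?_⟩
  rcases eq_or_lt_of_le hj1 with h1 | h2
  · -- j = 1, so a j = 1, so b = 1 = a j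
    have : a j = 1 := by rw [← h1]; exact ha1
    have hb : b = a j := le_antisymm hjb (this ▸ hb1)
    rw [← hb]
    linarith
  · -- j ≥ 2
    have hj2 : 2 ≤ j := h2
    have hlt : j - 1 < j := Nat.sub_lt (by omega) one_pos
    have hnot := Nat.find_min hex hlt
    have hab : a (j - 1) < b := by
      by_contra h
      exact hnot ⟨by omega, by omega, by omega⟩
    rcases hdense j hj2 hjm with h | h
    · have : s (a (j - 1)) ≤ s b := hs (le_of_lt hab)
      linarith
    · have : a j = b := by omega
      rw [this]
      linarith
end

section
/- Under the hypotheses of the density lemma, for every b ∈ [1, a_m] there exists a_j ∈ A such that s(a_j) + p(a_j, i) ≤ s(b) + p(b, i) + δ, for any fixed endpoint i ≥ a_m. -/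
theorem stmt12 (s : ℕ → ℝ) (hs : Monotone s) (hs0 : ∀ x, 0 ≤ s x)
    (p : ℕ → ℕ → ℝ)
    (pmono : ∀ x y i : ℕ, y ≤ x → x ≤ i → p x i ≤ p y i)
    (δ : ℝ) (hδ : 0 ≤ δ) (m : ℕ) (hm : 1 ≤ m) (a : ℕ → ℕ)
    (ha1 : a 1 = 1)
    (hsort : ∀ j, 1 ≤ j → j < m → a j < a (j + 1))
    (hdense : ∀ j, 2 ≤ j → j ≤ m → s (a j) ≤ δ + s (a (j - 1)) ∨ a j = a (j - 1) + 1)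
    (i : ℕ) (hi : a m ≤ i) :
    ∀ b, 1 ≤ b → b ≤ a m →
      ∃ j, 1 ≤ j ∧ j ≤ m ∧ s (a j) + p (a j) i ≤ s b + p b i + δ := by
  intro b hb1 hbm
  -- monotonicity of a on [1, m]
  have amono : ∀ j k, 1 ≤ j → j ≤ k → k ≤ m → a j ≤ a k := by
    intro j k hj hjk hkm
    induction k with
    | zero => omega
    | succ n ih =>
      rcases Nat.lt_or_ge j (n+1) with h | h
      · have h1 : 1 ≤ n := by omega
        have := hsort n h1 (by omega)
        have := ih (by omega) (by omega)
        omega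
      · have : j = n + 1 := by omega
        simp [this]
  classical
  set P : ℕ → Prop := fun j => 1 ≤ j ∧ a j ≤ b with hP
  have hP1 : P 1 := ⟨le_refl 1, by omega⟩
  set J := Nat.findGreatest P m with hJ
  have hJP : P J := Nat.findGreatest_spec hm hP1
  have hJm : J ≤ m := Nat.findGreatest_le m
  obtain ⟨hJ1, haJb⟩ := hJP
  rcases eq_or_lt_of_le hJm with heq | hlt
  · -- J = m, so a m ≤ b ≤ a m, b = a m
    have hb : b = a m := by
      have := haJb; rw [heq] at this; omega
    refine ⟨m, hm, le_refl m, ?_⟩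
    rw [hb]
    nlinarith []
  · -- J < m; maximality gives b < a (J+1)
    have hmax : ¬ P (J + 1) := Nat.findGreatest_is_greatest (n := m) (by omega) (by omega)
    have hbJ1 : b < a (J + 1) := by
      by_contra h
      exact hmax ⟨Nat.le_add_left 1 J, not_lt.mp h⟩
    have haJ1i : a (J + 1) ≤ i := le_trans (amono (J+1) m (by omega) (by omega) (le_refl m)) hi
    rcases hdense (J + 1) (by omega) (by omega) with hden | hden
    · -- s(a(J+1)) ≤ δ + s(a J)
      refine ⟨J + 1, by omega, by omega, ?_⟩
      have h1 : s (a J) ≤ s b := hs haJb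
      have h2 : p (a (J+1)) i ≤ p b i := pmono (a (J+1)) b i (le_of_lt hbJ1) haJ1i
      simp only [Nat.add_sub_cancel] at hden
      linarith
    · -- a(J+1) = a J + 1, so b = a J
      simp only [Nat.add_sub_cancel] at hden
      have hb : b = a J := by omega
      refine ⟨J, hJ1, by omega, ?_⟩
      rw [hb]
      nlinarith []
end

section
/- The output of the sparsify procedure preserves δ-density: if the input sorted list A (with smallest element 1) is δ-dense with respect to a monotone nondecreasing function s, then the list obtained by repeatedly removing the middle element a_{j+1} of any consecutive triple (a_j, a_{j+1}, a_{j+2}) with s(a_{j+2}) − s(a_j) ≤ δ is still δ-dense. -/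
/-- One sparsification step: remove the middle element of a consecutive triple
`x, y, z` with `s z − s x ≤ δ`. -/
def sparStep (s : ℕ → ℝ) (δ : ℝ) (A B : List ℕ) : Prop :=
  ∃ (l r : List ℕ) (x y z : ℕ),
    A = l ++ [x, y, z] ++ r ∧ B = l ++ [x, z] ++ r ∧ s z - s x ≤ δ

/-- `δ`-density of a list w.r.t. `s`: each consecutive pair `u, v` satisfies
`s v ≤ δ + s u` or `v = u + 1`. -/
def dense (s : ℕ → ℝ) (δ : ℝ) (A : List ℕ) : Prop :=
  A.Chain' (fun u v => s v ≤ δ + s u ∨ v = u + 1)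

theorem List.IsChain.erase_middle {α : Type*} {R : α → α → Prop} {l r : List α} {x y z : α}
    (h : (l ++ x :: y :: z :: r).IsChain R) (hxz : R x z) :
    (l ++ x :: z :: r).IsChain R := by
  rw [List.isChain_append, List.isChain_cons_cons, List.isChain_cons_cons] at h
  obtain ⟨hl, ⟨-, -, hzr⟩, hjoin⟩ := h
  rw [List.isChain_append, List.isChain_cons_cons]
  exact ⟨hl, ⟨hxz, hzr⟩, fun a ha b hb => hjoin a ha b (by simpa using hb)⟩

theorem dense_of_sparStep {s : ℕ → ℝ} {δ : ℝ} {A B : List ℕ}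
    (hA : dense s δ A) (h : sparStep s δ A B) : dense s δ B := by
  obtain ⟨l, r, x, y, z, rfl, rfl, hxz⟩ := h
  simp only [dense, List.append_assoc, List.cons_append, List.nil_append] at hA ⊢
  exact hA.erase_middle (Or.inl (by linarith))

theorem stmt14_general (s : ℕ → ℝ) (δ : ℝ)
    (A B : List ℕ)
    (hA : dense s δ A)
    (hAB : Relation.ReflTransGen (sparStep s δ) A B) :
    dense s δ B := by
  induction hAB with
  | refl => exact hA
  | tail _ hstep ih => exact dense_of_sparStep ih hstep

theorem stmt14 (s : ℕ → ℝ) (hs : Monotone s) (δ : ℝ) (hδ : 0 ≤ δ)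
    (A B : List ℕ) (hsort : A.Pairwise (· < ·)) (hhead : A.head? = some 1)
    (hA : dense s δ A)
    (hAB : Relation.ReflTransGen (sparStep s δ) A B) :
    dense s δ B :=
  stmt14_general s δ A B hA hAB
end
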